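/- arXiv:1506.06117 — 4 statements merged into one kernel-verified Lean document; each statement's English description precedes it below -/
import Mathlib

section
/- Let (π^N)_{N≥1} and π be probability measures on [0,1]^d with ‖π^N − π‖_E → 0 as N → ∞, where π is absolutely continuous with respect to Lebesgue measure with a bounded density. Let g̃ : [0,1]^d × [0,1]^d → [0,∞) be continuous (hence bounded) and satisfy ∫_{[0,1]^d} g̃(x, y) π(dx) = 1 for every y ∈ [0,1]^d. Define the Markov kernel M(y, dx) = g̃(x, y) π(dx), and for every N such that c_N := inf_{y∈[0,1]^d} ∫ g̃(x, y) π^N(dx) > 0, define M^N(y, dx) = g̃(x, y) π^N(dx) / ∫ g̃(x', y) π^N(dx'). Then c_N > 0 for all N sufficiently large, and sup_{y∈[0,1]^d} ‖M^N(y, ·) − M(y, ·)‖_E → 0 as N → ∞. -/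
open MeasureTheory ProbabilityTheory Filter Set
open scoped ENNReal NNReal

noncomputable section

/-- The closed unit cube `[0,1]^d` in `ℝ^d`. -/
def cubeIcc (d : ℕ) : Set (Fin d → ℝ) := Set.univ.pi fun _ => Set.Icc (0 : ℝ) 1

/-- The half-open unit cube `[0,1)^d` in `ℝ^d`. -/
def cubeIco (d : ℕ) : Set (Fin d → ℝ) := Set.univ.pi fun _ => Set.Ico (0 : ℝ) 1

/-- `IsGoodBox a b` : the box `∏ᵢ [aᵢ, bᵢ]` satisfies `0 ≤ aᵢ < bᵢ < 1` for all `i`. -/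
def IsGoodBox {d : ℕ} (a b : Fin d → ℝ) : Prop := ∀ i, 0 ≤ a i ∧ a i < b i ∧ b i < 1

/-- The closed box `∏ᵢ [aᵢ, bᵢ]` in `ℝ^d`. -/
def clBox {d : ℕ} (a b : Fin d → ℝ) : Set (Fin d → ℝ) :=
  Set.univ.pi fun i => Set.Icc (a i) (b i)

/-- The extreme norm distance `‖μ − ν‖_E` between two measures on `ℝ^d`:
the supremum over boxes `∏ᵢ [aᵢ, bᵢ]` with `0 ≤ aᵢ < bᵢ < 1` of `|μ(B) − ν(B)|`. -/
def extDist {d : ℕ} (μ ν : Measure (Fin d → ℝ)) : ℝ :=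
  ⨆ p : {q : (Fin d → ℝ) × (Fin d → ℝ) // IsGoodBox q.1 q.2},
    |(μ (clBox p.1.1 p.1.2)).toReal - (ν (clBox p.1.1 p.1.2)).toReal|

/-!
Only the upper faces of `[0,1]^d` escape the extreme norm. Letting the upper corner of a box
increase to a half-open limit, or decrease onto a degenerate box, gives
`|μ(B) - π(B)| ≤ ‖μ - π‖_E` for every product of intervals `[aᵢ, bᵢ] ∩ [lᵢ, rᵢ)` in `[0,1)^d`;
and since `π` has a density the faces are `π`-null, so their `π^N`-mass is at most
`‖π^N - π‖_E`. Cut a box `B` along the grid of mesh `1/n` and replace `g̃(·, y)` on each cell by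
its value at the corner of the cell. Uniform continuity of `g̃` on the compact
`[0,1]^d × [0,1]^d` makes this error at most `ε/4` for large `n`, uniformly in `y`, so
`|∫_B g̃(·,y) dπ^N - ∫_B g̃(·,y) dπ| ≤ ε/2 + n^d ‖g̃‖_∞ ‖π^N - π‖_E` uniformly in `B` and `y`. For `B = [0,1)^d` this yields `c_N → 1` uniformly in `y`, and then
`M^N(y, B) = c_N(y)⁻¹ ∫_B g̃(·,y) dπ^N` converges to `M(y, B)`.
-/

open Topology

section Cube

variable {d : ℕ}

lemma measurableSet_cubeIcc : MeasurableSet (cubeIcc d) :=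
  MeasurableSet.univ_pi fun _ => measurableSet_Icc

lemma measurableSet_cubeIco : MeasurableSet (cubeIco d) :=
  MeasurableSet.univ_pi fun _ => measurableSet_Ico

lemma clBox_zero_one : clBox (fun _ => (0 : ℝ)) (fun _ => 1) = cubeIcc d := rfl

lemma zero_mem_cubeIcc : (0 : Fin d → ℝ) ∈ cubeIcc d :=
  fun _ _ => ⟨le_rfl, zero_le_one⟩

lemma measurableSet_clBox (a b : Fin d → ℝ) : MeasurableSet (clBox a b) :=
  MeasurableSet.univ_pi fun _ => measurableSet_Icc

lemma isCompact_cubeIcc : IsCompact (cubeIcc d) :=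
  isCompact_univ_pi fun _ => isCompact_Icc

lemma cubeIco_subset_cubeIcc : cubeIco d ⊆ cubeIcc d :=
  pi_mono fun _ _ => Ico_subset_Icc_self

lemma clBox_subset_cubeIco {a b : Fin d → ℝ} (hab : IsGoodBox a b) : clBox a b ⊆ cubeIco d :=
  pi_mono fun i _ => Icc_subset_Ico (hab i).1 (hab i).2.2

end Cube

section ExtremeNorm

variable {d : ℕ} {μ ν : Measure (Fin d → ℝ)} [IsFiniteMeasure μ] [IsFiniteMeasure ν]

lemma extDist_nonneg (μ ν : Measure (Fin d → ℝ)) : 0 ≤ extDist μ ν :=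
  Real.iSup_nonneg fun _ => abs_nonneg _

lemma abs_measureReal_sub_le_extDist {a b : Fin d → ℝ} (hab : IsGoodBox a b) :
    |μ.real (clBox a b) - ν.real (clBox a b)| ≤ extDist μ ν := by
  refine le_ciSup (f := fun p : {q : (Fin d → ℝ) × (Fin d → ℝ) // IsGoodBox q.1 q.2} =>
    |μ.real (clBox p.1.1 p.1.2) - ν.real (clBox p.1.1 p.1.2)|) ⟨μ.real univ + ν.real univ, ?_⟩
    ⟨(a, b), hab⟩
  rintro _ ⟨p, rfl⟩
  have hμ := measureReal_mono (μ := μ) (subset_univ (clBox p.1.1 p.1.2))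
  have hν := measureReal_mono (μ := ν) (subset_univ (clBox p.1.1 p.1.2))
  exact abs_sub_le_iff.2 ⟨by linarith [measureReal_nonneg (μ := ν) (s := clBox p.1.1 p.1.2)],
    by linarith [measureReal_nonneg (μ := μ) (s := clBox p.1.1 p.1.2)]⟩

lemma abs_measureReal_sub_le_of_tendsto {ι : Type*} {l : Filter ι} [l.NeBot]
    {s : ι → Set (Fin d → ℝ)} {S : Set (Fin d → ℝ)} (hμ : Tendsto (μ ∘ s) l (𝓝 (μ S))) (hν : Tendsto (ν ∘ s) l (𝓝 (ν S)))
    {c : ℝ} (hc : ∀ᶠ t in l, |μ.real (s t) - ν.real (s t)| ≤ c) :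
    |μ.real S - ν.real S| ≤ c := by
  have hreal : ∀ {ρ : Measure (Fin d → ℝ)} [IsFiniteMeasure ρ], Tendsto (ρ ∘ s) l (𝓝 (ρ S)) →
      Tendsto (fun t => ρ.real (s t)) l (𝓝 (ρ.real S)) :=
    fun h => (ENNReal.tendsto_toReal (measure_ne_top _ _)).comp h
  exact le_of_tendsto (((hreal hμ).sub (hreal hν)).abs) hc

lemma abs_measureReal_clBox_sub_le_extDist {a b : Fin d → ℝ} (ha : ∀ i, 0 ≤ a i)
    (hb : ∀ i, b i < 1) :
    |μ.real (clBox a b) - ν.real (clBox a b)| ≤ extDist μ ν := by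
  by_cases hab : ∀ i, a i ≤ b i
  swap
  · obtain ⟨i, hi⟩ := not_forall.1 hab
    have hempty : clBox a b = ∅ := univ_pi_eq_empty (i := i) (Icc_eq_empty hi)
    simpa [hempty] using extDist_nonneg μ ν
  let s : ℝ → Set (Fin d → ℝ) := fun t => clBox a (fun i => b i + t)
  have hinter : (⋂ t > 0, s t) = clBox a b := by
    ext x
    simp only [s, clBox, mem_iInter, mem_univ_pi, mem_Icc]
    exact ⟨fun h i => ⟨(h 1 one_pos i).1, le_of_forall_pos_le_add fun t ht => (h t ht i).2⟩,
      fun h t ht i => ⟨(h i).1, by linarith [(h i).2]⟩⟩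
  have hlim : ∀ (ρ : Measure (Fin d → ℝ)) [IsFiniteMeasure ρ],
      Tendsto (ρ ∘ s) (𝓝[>] 0) (𝓝 (ρ (clBox a b))) := fun ρ _ => by
    rw [← hinter]
    refine tendsto_measure_biInter_gt (fun t _ => (measurableSet_clBox _ _).nullMeasurableSet)
      (fun t t' _ htt' x hx i _ => ?_) ⟨1, one_pos, measure_ne_top _ _⟩
    exact ⟨(hx i trivial).1, by linarith [(hx i trivial).2]⟩
  refine abs_measureReal_sub_le_of_tendsto (hlim μ) (hlim ν) ?_
  have hsmall : ∀ᶠ t in 𝓝[>] (0 : ℝ), ∀ i, t < 1 - b i :=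
    eventually_all.2 fun i => eventually_nhdsWithin_of_eventually_nhds
      (eventually_lt_nhds (by linarith [hb i]))
  filter_upwards [hsmall, self_mem_nhdsWithin] with t ht (ht0 : 0 < t)
  exact abs_measureReal_sub_le_extDist fun i =>
    ⟨ha i, by linarith [hab i], by linarith [ht i]⟩

lemma abs_measureReal_clBox_inter_pi_Ico_sub_le_extDist (a b : Fin d → ℝ) {l r : Fin d → ℝ}
    (hl : ∀ i, 0 ≤ l i) (hr : ∀ i, r i ≤ 1) :
    |μ.real (clBox a b ∩ univ.pi fun i => Ico (l i) (r i)) -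
      ν.real (clBox a b ∩ univ.pi fun i => Ico (l i) (r i))| ≤ extDist μ ν := by
  let s : ℕ → Set (Fin d → ℝ) := fun n => clBox (a ⊔ l) (b ⊓ fun i => r i - 1 / (n + 1))
  have hmono : Monotone s := fun m n hmn x hx i _ => by
    have h : 1 / ((n : ℝ) + 1) ≤ 1 / ((m : ℝ) + 1) := by gcongr
    have hx := hx i trivial
    simp only [mem_Icc, Pi.sup_apply, Pi.inf_apply, le_min_iff] at hx ⊢
    exact ⟨hx.1, hx.2.1, by linarith [hx.2.2]⟩
  have hunion : (⋃ n, s n) = clBox a b ∩ univ.pi fun i => Ico (l i) (r i) := by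
    ext x
    simp only [s, clBox, mem_iUnion, mem_inter_iff, mem_univ_pi, mem_Icc, mem_Ico, Pi.sup_apply,
      Pi.inf_apply, max_le_iff, le_min_iff]
    constructor
    · rintro ⟨n, hn⟩
      exact ⟨fun i => ⟨(hn i).1.1, (hn i).2.1⟩, fun i => ⟨(hn i).1.2, by
        linarith [(hn i).2.2, Nat.one_div_pos_of_nat (α := ℝ) (n := n)]⟩⟩
    · rintro ⟨hab, hlr⟩
      have hev : ∀ᶠ n : ℕ in atTop, ∀ i, x i ≤ r i - 1 / (n + 1) :=
        eventually_all.2 fun i => (tendsto_one_div_add_atTop_nhds_zero_nat.eventually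
          (eventually_le_nhds (sub_pos.2 (hlr i).2))).mono fun n hn => by linarith
      obtain ⟨n, hn⟩ := hev.exists
      exact ⟨n, fun i => ⟨⟨(hab i).1, (hlr i).1⟩, (hab i).2, hn i⟩⟩
  rw [← hunion]
  refine abs_measureReal_sub_le_of_tendsto (tendsto_measure_iUnion_atTop hmono)
    (tendsto_measure_iUnion_atTop hmono) (Eventually.of_forall fun n => ?_)
  refine abs_measureReal_clBox_sub_le_extDist (fun i => le_sup_of_le_right (hl i)) fun i => ?_
  have : 0 < 1 / ((n : ℝ) + 1) := Nat.one_div_pos_of_nat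
  exact inf_lt_of_right_lt (by simp only; linarith [hr i])

end ExtremeNorm

section RiemannSum

variable {α ι : Type*} [MeasurableSpace α] {μ ν : Measure α} [IsFiniteMeasure μ]
  [IsFiniteMeasure ν] {f : α → ℝ} {η : ℝ}

lemma abs_setIntegral_sub_mul_measureReal_le {s : Set α} (hf : IntegrableOn f s μ) {c : ℝ}
    (hc : ∀ x ∈ s, |f x - c| ≤ η) :
    |∫ x in s, f x ∂μ - c * μ.real s| ≤ η * μ.real s := by
  have h : ∫ x in s, f x ∂μ - c * μ.real s = ∫ x in s, (f x - c) ∂μ := by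
    rw [integral_sub hf (integrableOn_const (measure_ne_top _ _)), setIntegral_const, smul_eq_mul,
      mul_comm]
  rw [h]
  exact norm_setIntegral_le_of_norm_le_const (measure_lt_top _ _) fun x hx =>
    (Real.norm_eq_abs _).trans_le (hc x hx)

lemma abs_setIntegral_sub_setIntegral_le {s : Set α} (hfμ : IntegrableOn f s μ)
    (hfν : IntegrableOn f s ν) {c : ℝ} (hc : ∀ x ∈ s, |f x - c| ≤ η) :
    |∫ x in s, f x ∂μ - ∫ x in s, f x ∂ν| ≤
      η * (μ.real s + ν.real s) + |c| * |μ.real s - ν.real s| := by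
  have hμ := abs_setIntegral_sub_mul_measureReal_le hfμ hc
  have hν := abs_setIntegral_sub_mul_measureReal_le hfν hc
  calc |∫ x in s, f x ∂μ - ∫ x in s, f x ∂ν|
      = |(∫ x in s, f x ∂μ - c * μ.real s) - (∫ x in s, f x ∂ν - c * ν.real s) +
          c * (μ.real s - ν.real s)| := by ring_nf
    _ ≤ |∫ x in s, f x ∂μ - c * μ.real s| + |∫ x in s, f x ∂ν - c * ν.real s| +
          |c * (μ.real s - ν.real s)| := (abs_add_le _ _).trans (by gcongr; exact abs_sub _ _)
    _ ≤ η * (μ.real s + ν.real s) + |c| * |μ.real s - ν.real s| := by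
      rw [abs_mul]; linarith

lemma abs_setIntegral_iUnion_sub_le [Fintype ι] {s : ι → Set α} (hs : ∀ i, MeasurableSet (s i))
    (hdisj : Pairwise (Function.onFun Disjoint s)) (hfμ : ∀ i, IntegrableOn f (s i) μ)
    (hfν : ∀ i, IntegrableOn f (s i) ν) {c : ι → ℝ} (hc : ∀ i, ∀ x ∈ s i, |f x - c i| ≤ η) :
    |∫ x in ⋃ i, s i, f x ∂μ - ∫ x in ⋃ i, s i, f x ∂ν| ≤
      η * (μ.real (⋃ i, s i) + ν.real (⋃ i, s i)) +
        ∑ i, |c i| * |μ.real (s i) - ν.real (s i)| := by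
  rw [integral_iUnion_fintype hs hdisj hfμ, integral_iUnion_fintype hs hdisj hfν,
    measureReal_iUnion_fintype hdisj hs, measureReal_iUnion_fintype hdisj hs,
    ← Finset.sum_sub_distrib, ← Finset.sum_add_distrib, Finset.mul_sum, ← Finset.sum_add_distrib]
  exact (Finset.abs_sum_le_sum_abs _ _).trans
    (Finset.sum_le_sum fun i _ => abs_setIntegral_sub_setIntegral_le (hfμ i) (hfν i) (hc i))

end RiemannSum

section Grid

variable {d n : ℕ}

def gridCell (n : ℕ) (k : Fin d → Fin n) : Set (Fin d → ℝ) :=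
  univ.pi fun i => Ico (((k i : ℕ) : ℝ) / n) ((((k i : ℕ) : ℝ) + 1) / n)

def gridCorner (n : ℕ) (k : Fin d → Fin n) : Fin d → ℝ := fun i => ((k i : ℕ) : ℝ) / n

lemma mem_Ico_div_iff (hn : 0 < n) {t : ℝ} {k : ℕ} :
    t ∈ Ico ((k : ℝ) / n) (((k : ℝ) + 1) / n) ↔ 0 ≤ t ∧ ⌊t * n⌋₊ = k := by
  have hn' : (0 : ℝ) < n := Nat.cast_pos.2 hn
  rw [mem_Ico, div_le_iff₀ hn', lt_div_iff₀ hn']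
  constructor
  · rintro ⟨h₁, h₂⟩
    have ht : 0 ≤ t := nonneg_of_mul_nonneg_left (h₁.trans' k.cast_nonneg) hn'
    exact ⟨ht, (Nat.floor_eq_iff (mul_nonneg ht hn'.le)).2 ⟨h₁, h₂⟩⟩
  · rintro ⟨ht, hk⟩
    exact (Nat.floor_eq_iff (mul_nonneg ht hn'.le)).1 hk

lemma measurableSet_gridCell (k : Fin d → Fin n) : MeasurableSet (gridCell n k) :=
  MeasurableSet.univ_pi fun _ => measurableSet_Ico

lemma pairwise_disjoint_gridCell (hn : 0 < n) :
    Pairwise (Function.onFun Disjoint (gridCell (d := d) n)) := by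
  intro k k' hkk'
  refine Set.disjoint_left.2 fun x hx hx' => hkk' (funext fun i => Fin.ext ?_)
  rw [← ((mem_Ico_div_iff hn).1 (hx i trivial)).2, ← ((mem_Ico_div_iff hn).1 (hx' i trivial)).2]

lemma iUnion_gridCell (hn : 0 < n) : (⋃ k, gridCell (d := d) n k) = cubeIco d := by
  have hn' : (0 : ℝ) < n := Nat.cast_pos.2 hn
  ext x
  simp only [mem_iUnion, gridCell, cubeIco, mem_univ_pi]
  constructor
  · rintro ⟨k, hk⟩ i
    refine ⟨((mem_Ico_div_iff hn).1 (hk i)).1, (hk i).2.trans_le ?_⟩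
    rw [div_le_one hn']
    exact_mod_cast (k i).isLt
  · intro hx
    have hlt : ∀ i, ⌊x i * n⌋₊ < n := fun i =>
      (Nat.floor_lt (mul_nonneg (hx i).1 hn'.le)).2 (by nlinarith [(hx i).2])
    exact ⟨fun i => ⟨_, hlt i⟩, fun i => (mem_Ico_div_iff hn).2 ⟨(hx i).1, rfl⟩⟩

lemma gridCell_subset_cubeIco (hn : 0 < n) (k : Fin d → Fin n) : gridCell n k ⊆ cubeIco d :=
  iUnion_gridCell hn ▸ subset_iUnion _ k

lemma gridCorner_mem_gridCell (hn : 0 < n) (k : Fin d → Fin n) : gridCorner n k ∈ gridCell n k :=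
  fun _ _ => ⟨le_rfl, div_lt_div_of_pos_right (lt_add_one _) (Nat.cast_pos.2 hn)⟩

lemma dist_lt_of_mem_gridCell (hn : 0 < n) {k : Fin d → Fin n} {x y : Fin d → ℝ}
    (hx : x ∈ gridCell n k) (hy : y ∈ gridCell n k) : dist x y < 1 / n := by
  refine (dist_pi_lt_iff (by positivity)).2 fun i => ?_
  obtain ⟨hx₁, hx₂⟩ := hx i trivial
  obtain ⟨hy₁, hy₂⟩ := hy i trivial
  rw [add_div] at hx₂ hy₂
  rw [Real.dist_eq, abs_sub_lt_iff]
  constructor <;> linarith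

end Grid

section BoxIntegral

variable {d n : ℕ} {μ π : Measure (Fin d → ℝ)} [IsProbabilityMeasure μ] [IsProbabilityMeasure π]

lemma abs_setIntegral_clBox_inter_cubeIco_sub_le {f : (Fin d → ℝ) → ℝ}
    (hf : ContinuousOn f (cubeIcc d)) (hn : 0 < n) {η C : ℝ}
    (hosc : ∀ k, ∀ x ∈ gridCell n k, |f x - f (gridCorner n k)| ≤ η)
    (hC : ∀ k : Fin d → Fin n, |f (gridCorner n k)| ≤ C) (a b : Fin d → ℝ) :
    |∫ x in clBox a b ∩ cubeIco d, f x ∂μ - ∫ x in clBox a b ∩ cubeIco d, f x ∂π| ≤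
      2 * η + n ^ d * C * extDist μ π := by
  have hη : 0 ≤ η := by
    simpa using hosc (fun _ => ⟨0, hn⟩) _ (gridCorner_mem_gridCell hn _)
  have hint : ∀ (ρ : Measure (Fin d → ℝ)) [IsProbabilityMeasure ρ] (k : Fin d → Fin n),
      IntegrableOn f (clBox a b ∩ gridCell n k) ρ := fun ρ _ k =>
    (hf.integrableOn_compact isCompact_cubeIcc).mono_set
      (inter_subset_right.trans ((gridCell_subset_cubeIco hn k).trans cubeIco_subset_cubeIcc))
  have hcell : ∀ k : Fin d → Fin n, |μ.real (clBox a b ∩ gridCell n k) -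
      π.real (clBox a b ∩ gridCell n k)| ≤ extDist μ π := fun k =>
    abs_measureReal_clBox_inter_pi_Ico_sub_le_extDist a b (fun _ => by positivity)
      fun i => (div_le_one (Nat.cast_pos.2 hn)).2 (by exact_mod_cast (k i).isLt)
  rw [← iUnion_gridCell hn, inter_iUnion]
  refine (abs_setIntegral_iUnion_sub_le (fun k => (measurableSet_clBox a b).inter
    (measurableSet_gridCell k)) (fun k k' hkk' => ((pairwise_disjoint_gridCell hn hkk').mono
      inter_subset_right inter_subset_right)) (hint μ) (hint π)
    (fun k x hx => hosc k x hx.2)).trans ?_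
  have hmass :
      μ.real (⋃ k, clBox a b ∩ gridCell n k) + π.real (⋃ k, clBox a b ∩ gridCell n k) ≤ 2 := by
    linarith [measureReal_le_one (μ := μ) (s := ⋃ k, clBox a b ∩ gridCell n k),
      measureReal_le_one (μ := π) (s := ⋃ k, clBox a b ∩ gridCell n k)]
  have hsum : ∑ k : Fin d → Fin n, |f (gridCorner n k)| *
      |μ.real (clBox a b ∩ gridCell n k) - π.real (clBox a b ∩ gridCell n k)| ≤
      ∑ _k : Fin d → Fin n, C * extDist μ π :=
    Finset.sum_le_sum fun k _ => mul_le_mul (hC k) (hcell k) (abs_nonneg _)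
      ((abs_nonneg _).trans (hC k))
  simp only [Finset.sum_const, Finset.card_univ, Fintype.card_fun, Fintype.card_fin,
    nsmul_eq_mul, Nat.cast_pow] at hsum
  nlinarith

lemma eventually_abs_setIntegral_clBox_inter_cubeIco_sub_le {Y : Type*} [PseudoMetricSpace Y]
    {K : Set Y} (hK : IsCompact K) {g : (Fin d → ℝ) → Y → ℝ}
    (hg : ContinuousOn (fun p : (Fin d → ℝ) × Y => g p.1 p.2) (cubeIcc d ×ˢ K))
    {ι : Type*} {l : Filter ι} {μ : ι → Measure (Fin d → ℝ)} [∀ i, IsProbabilityMeasure (μ i)]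
    {π : Measure (Fin d → ℝ)} [IsProbabilityMeasure π]
    (hμ : Tendsto (fun i => extDist (μ i) π) l (𝓝 0)) {ε : ℝ} (hε : 0 < ε) :
    ∀ᶠ i in l, ∀ y ∈ K, ∀ a b : Fin d → ℝ,
      |∫ x in clBox a b ∩ cubeIco d, g x y ∂μ i - ∫ x in clBox a b ∩ cubeIco d, g x y ∂π| ≤ ε := by
  have hcpt := (isCompact_cubeIcc (d := d)).prod hK
  obtain ⟨C, hC⟩ := hcpt.exists_bound_of_continuousOn hg
  obtain ⟨δ, hδ, hgδ⟩ := Metric.uniformContinuousOn_iff.1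
    (hcpt.uniformContinuousOn_of_continuous hg) (ε / 4) (by positivity)
  obtain ⟨n, hn⟩ := exists_nat_one_div_lt hδ
  have hcorner : ∀ k : Fin d → Fin (n + 1), gridCorner (n + 1) k ∈ cubeIcc d := fun k =>
    cubeIco_subset_cubeIcc (gridCell_subset_cubeIco n.succ_pos k
      (gridCorner_mem_gridCell n.succ_pos k))
  have hsmall : ∀ᶠ i in l, (n + 1 : ℝ) ^ d * C * extDist (μ i) π ≤ ε / 2 := by
    have h := hμ.const_mul ((n + 1 : ℝ) ^ d * C)
    rw [mul_zero] at h
    exact h.eventually (ge_mem_nhds (half_pos hε))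
  filter_upwards [hsmall] with i hi y hy a b
  have hosc : ∀ k, ∀ x ∈ gridCell (n + 1) k, |g x y - g (gridCorner (n + 1) k) y| ≤ ε / 4 := by
    intro k x hx
    have hx' := cubeIco_subset_cubeIcc (gridCell_subset_cubeIco n.succ_pos k hx)
    have hdist : dist (x, y) (gridCorner (n + 1) k, y) < δ := by
      rw [Prod.dist_eq, dist_self, max_eq_left dist_nonneg]
      exact (dist_lt_of_mem_gridCell n.succ_pos hx (gridCorner_mem_gridCell n.succ_pos k)).trans
        (by exact_mod_cast hn)
    exact (hgδ _ (mk_mem_prod hx' hy) _ (mk_mem_prod (hcorner k) hy) hdist).le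
  have h := abs_setIntegral_clBox_inter_cubeIco_sub_le (μ := μ i) (π := π) (f := fun x => g x y)
    (hg.uncurry_right y hy) n.succ_pos hosc (fun k => hC _ (mk_mem_prod (hcorner k) hy)) a b
  push_cast at h
  linarith

end BoxIntegral

section Support

variable {d : ℕ} {ρ : Measure (Fin d → ℝ)} [IsProbabilityMeasure ρ]

lemma volume_cubeIcc_diff_cubeIco : volume (cubeIcc d \ cubeIco d) = 0 := by
  refine measure_mono_null (t := ⋃ i, {x | x i = 1}) (fun x hx => ?_)
    (measure_iUnion_null fun i => by rw [volume_pi]; exact Measure.pi_hyperplane _ i 1)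
  obtain ⟨hIcc, hIco⟩ := hx
  obtain ⟨i, hi⟩ : ∃ i, x i ∉ Ico (0 : ℝ) 1 := by
    by_contra! h
    exact hIco fun i _ => h i
  exact mem_iUnion.2 ⟨i, le_antisymm (hIcc i trivial).2
    (not_lt.1 fun h => hi ⟨(hIcc i trivial).1, h⟩)⟩

lemma measure_cubeIco_eq_one (hρ : ρ ≪ volume) (hρc : ρ (cubeIcc d) = 1) :
    ρ (cubeIco d) = 1 := by
  refine le_antisymm prob_le_one (hρc ▸ ?_)
  calc ρ (cubeIcc d) ≤ ρ (cubeIco d ∪ cubeIcc d \ cubeIco d) := measure_mono (by simp)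
    _ ≤ ρ (cubeIco d) + ρ (cubeIcc d \ cubeIco d) := measure_union_le _ _
    _ = ρ (cubeIco d) := by rw [hρ volume_cubeIcc_diff_cubeIco, add_zero]

lemma integral_eq_setIntegral_of_measure_eq_one {s : Set (Fin d → ℝ)} (hs : MeasurableSet s)
    (hρs : ρ s = 1) (f : (Fin d → ℝ) → ℝ) : ∫ x, f x ∂ρ = ∫ x in s, f x ∂ρ := by
  rw [Measure.restrict_eq_self_of_ae_mem ((mem_ae_iff_prob_eq_one hs).2 hρs)]

lemma integrable_of_continuousOn_cubeIcc (hρc : ρ (cubeIcc d) = 1) {f : (Fin d → ℝ) → ℝ}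
    (hf : ContinuousOn f (cubeIcc d)) : Integrable f ρ := by
  rw [← Measure.restrict_eq_self_of_ae_mem ((mem_ae_iff_prob_eq_one measurableSet_cubeIcc).2 hρc)]
  exact hf.integrableOn_compact isCompact_cubeIcc

lemma measureReal_cubeIcc_diff_cubeIco_le (hρc : ρ (cubeIcc d) = 1) {π : Measure (Fin d → ℝ)}
    [IsProbabilityMeasure π] (hπ : π (cubeIco d) = 1) :
    ρ.real (cubeIcc d \ cubeIco d) ≤ extDist ρ π := by
  have h : |ρ.real (clBox (fun _ => 0) (fun _ => 1) ∩ cubeIco d) -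
      π.real (clBox (fun _ => 0) (fun _ => 1) ∩ cubeIco d)| ≤ extDist ρ π :=
    abs_measureReal_clBox_inter_pi_Ico_sub_le_extDist _ _ (fun _ => le_rfl)
      fun _ => le_rfl
  rw [clBox_zero_one, inter_eq_right.2 cubeIco_subset_cubeIcc] at h
  rw [measureReal_sdiff cubeIco_subset_cubeIcc measurableSet_cubeIco, measureReal_def, hρc]
  rw [measureReal_def π, hπ] at h
  simp only [ENNReal.toReal_one] at h ⊢
  linarith [abs_le.1 h]

end Support

section Normalization

variable {d : ℕ}

lemma eventually_abs_integral_sub_le {Y : Type*} [PseudoMetricSpace Y]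
    {K : Set Y} (hK : IsCompact K) {g : (Fin d → ℝ) → Y → ℝ}
    (hg : ContinuousOn (fun p : (Fin d → ℝ) × Y => g p.1 p.2) (cubeIcc d ×ˢ K))
    {ι : Type*} {l : Filter ι} {μ : ι → Measure (Fin d → ℝ)} [∀ i, IsProbabilityMeasure (μ i)]
    (hμc : ∀ i, μ i (cubeIcc d) = 1) {π : Measure (Fin d → ℝ)} [IsProbabilityMeasure π]
    (hπ : π (cubeIco d) = 1) (hμ : Tendsto (fun i => extDist (μ i) π) l (𝓝 0)) {ε : ℝ}
    (hε : 0 < ε) :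
    ∀ᶠ i in l, ∀ y ∈ K, |∫ x, g x y ∂μ i - ∫ x, g x y ∂π| ≤ ε := by
  obtain ⟨C, hC⟩ := ((isCompact_cubeIcc (d := d)).prod hK).exists_bound_of_continuousOn hg
  have hsmall : ∀ᶠ i in l, C * extDist (μ i) π ≤ ε / 2 := by
    have h := hμ.const_mul C
    rw [mul_zero] at h
    exact h.eventually (ge_mem_nhds (half_pos hε))
  filter_upwards [eventually_abs_setIntegral_clBox_inter_cubeIco_sub_le hK hg hμ (half_pos hε),
    hsmall] with i hbox hCE y hy
  have hC0 : 0 ≤ C := (norm_nonneg _).trans (hC (0, y) (mk_mem_prod zero_mem_cubeIcc hy))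
  have hsplit : ∫ x, g x y ∂μ i =
      ∫ x in cubeIco d, g x y ∂μ i + ∫ x in cubeIcc d \ cubeIco d, g x y ∂μ i := by
    rw [integral_eq_setIntegral_of_measure_eq_one measurableSet_cubeIcc (hμc i),
      ← integral_inter_add_sdiff measurableSet_cubeIco
        ((hg.uncurry_right y hy).integrableOn_compact isCompact_cubeIcc),
      inter_eq_right.2 cubeIco_subset_cubeIcc]
  have hface : |∫ x in cubeIcc d \ cubeIco d, g x y ∂μ i| ≤ C * extDist (μ i) π :=
    (norm_setIntegral_le_of_norm_le_const (measure_lt_top _ _)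
      fun x hx => hC (x, y) (mk_mem_prod hx.1 hy)).trans
      (mul_le_mul_of_nonneg_left (measureReal_cubeIcc_diff_cubeIco_le (hμc i) hπ) hC0)
  have hIco : |∫ x in cubeIco d, g x y ∂μ i - ∫ x in cubeIco d, g x y ∂π| ≤ ε / 2 := by
    have h := hbox y hy (fun _ => 0) (fun _ => 1)
    rwa [clBox_zero_one, inter_eq_right.2 cubeIco_subset_cubeIcc] at h
  rw [hsplit, integral_eq_setIntegral_of_measure_eq_one measurableSet_cubeIco hπ]
  calc _ = |(∫ x in cubeIco d, g x y ∂μ i - ∫ x in cubeIco d, g x y ∂π) +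
        ∫ x in cubeIcc d \ cubeIco d, g x y ∂μ i| := by ring_nf
    _ ≤ ε := (abs_add_le _ _).trans (by linarith)

end Normalization

lemma toReal_withDensity_ofReal_apply {α : Type*} [MeasurableSpace α] {ρ : Measure α}
    {f : α → ℝ} {s : Set α} (hs : MeasurableSet s) (hf : IntegrableOn f s ρ)
    (hnn : ∀ x ∈ s, 0 ≤ f x) :
    ((ρ.withDensity fun x => ENNReal.ofReal (f x)) s).toReal = ∫ x in s, f x ∂ρ := by
  rw [withDensity_apply _ hs, ← ofReal_integral_eq_lintegral_ofReal hf
    (ae_restrict_of_forall_mem hs hnn), ENNReal.toReal_ofReal (setIntegral_nonneg hs hnn)]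

lemma abs_inv_mul_sub_le {c x y : ℝ} (hc : 1 / 2 ≤ c) (hx₀ : 0 ≤ x) (hx₁ : x ≤ 1) :
    |c⁻¹ * y - x| ≤ 2 * (|y - x| + |c - 1|) := by
  have hc₀ : 0 < c := by linarith
  have h : c⁻¹ * y - x = c⁻¹ * ((y - x) + x * (1 - c)) := by field_simp; ring
  rw [h, abs_mul, abs_inv, abs_of_pos hc₀]
  have hinv : c⁻¹ ≤ 2 := by rw [inv_le_comm₀ hc₀ two_pos]; linarith
  have hxc : |x * (1 - c)| ≤ |c - 1| := by
    rw [abs_mul, abs_sub_comm, abs_of_nonneg hx₀]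
    exact mul_le_of_le_one_left (abs_nonneg _) hx₁
  calc c⁻¹ * |y - x + x * (1 - c)| ≤ c⁻¹ * (|y - x| + |c - 1|) :=
        mul_le_mul_of_nonneg_left ((abs_add_le _ _).trans (by linarith)) (by positivity)
    _ ≤ 2 * (|y - x| + |c - 1|) := mul_le_mul_of_nonneg_right hinv (by positivity)

lemma abs_toReal_reweighted_sub_le {d : ℕ} {ρ π : Measure (Fin d → ℝ)} [IsProbabilityMeasure ρ]
    [IsProbabilityMeasure π] (hρc : ρ (cubeIcc d) = 1) (hπc : π (cubeIcc d) = 1)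
    {f : (Fin d → ℝ) → ℝ} (hf : ContinuousOn f (cubeIcc d)) (hnn : ∀ x ∈ cubeIcc d, 0 ≤ f x)
    (hπf : ∫ x, f x ∂π = 1) (hρf : 1 / 2 ≤ ∫ x, f x ∂ρ) {a b : Fin d → ℝ} (hab : IsGoodBox a b) :
    |(((ENNReal.ofReal (∫ x, f x ∂ρ))⁻¹ • ρ.withDensity fun x => ENNReal.ofReal (f x))
        (clBox a b)).toReal - ((π.withDensity fun x => ENNReal.ofReal (f x)) (clBox a b)).toReal| ≤
      2 * (|∫ x in clBox a b, f x ∂ρ - ∫ x in clBox a b, f x ∂π| + |∫ x, f x ∂ρ - 1|) := by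
  have hB : clBox a b ⊆ cubeIcc d := (clBox_subset_cubeIco hab).trans cubeIco_subset_cubeIcc
  have hnnB : ∀ x ∈ clBox a b, 0 ≤ f x := fun x hx => hnn x (hB hx)
  have hreal : ∀ (μ : Measure (Fin d → ℝ)) [IsProbabilityMeasure μ], μ (cubeIcc d) = 1 →
      ((μ.withDensity fun x => ENNReal.ofReal (f x)) (clBox a b)).toReal =
        ∫ x in clBox a b, f x ∂μ := fun μ _ hμ =>
    toReal_withDensity_ofReal_apply (measurableSet_clBox a b)
      (integrable_of_continuousOn_cubeIcc hμ hf).integrableOn hnnB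
  have hle_one : ∫ x in clBox a b, f x ∂π ≤ 1 := hπf ▸ setIntegral_le_integral
    (integrable_of_continuousOn_cubeIcc hπc hf)
    (Eventually.mono ((mem_ae_iff_prob_eq_one measurableSet_cubeIcc).2 hπc) hnn)
  rw [Measure.smul_apply, smul_eq_mul, ENNReal.toReal_mul, hreal ρ hρc, hreal π hπc,
    ENNReal.toReal_inv, ENNReal.toReal_ofReal (by linarith)]
  exact abs_inv_mul_sub_le hρf (setIntegral_nonneg (measurableSet_clBox a b) hnnB) hle_one

theorem backward_kernel_uniform_consistency_general
    {d : ℕ}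
    (πseq : ℕ → Measure (Fin d → ℝ)) (π : Measure (Fin d → ℝ))
    [∀ N, IsProbabilityMeasure (πseq N)] [IsProbabilityMeasure π]
    (hseqc : ∀ N, πseq N (cubeIcc d) = 1) (hπc : π (cubeIcc d) = 1)
    (hconv : Tendsto (fun N => extDist (πseq N) π) atTop (nhds 0))
    (hdens : ∃ M : ℝ≥0∞, M ≠ ⊤ ∧ π ≤ M • volume)
    (g : (Fin d → ℝ) → (Fin d → ℝ) → ℝ)
    (hgcont : ContinuousOn (fun p : (Fin d → ℝ) × (Fin d → ℝ) => g p.1 p.2)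
      (cubeIcc d ×ˢ cubeIcc d))
    (hgnn : ∀ x ∈ cubeIcc d, ∀ y ∈ cubeIcc d, 0 ≤ g x y)
    (hgint : ∀ y ∈ cubeIcc d, ∫ x, g x y ∂π = 1) :
    (∀ᶠ N in atTop, 0 < ⨅ y : ↥(cubeIcc d), ∫ x, g x (y : Fin d → ℝ) ∂(πseq N)) ∧
    (∀ ε > 0, ∀ᶠ N in atTop, ∀ y ∈ cubeIcc d,
      extDist
        ((ENNReal.ofReal (∫ x, g x y ∂(πseq N)))⁻¹ •
          (πseq N).withDensity fun x => ENNReal.ofReal (g x y))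
        (π.withDensity fun x => ENNReal.ofReal (g x y)) ≤ ε) := by
  obtain ⟨M, -, hM⟩ := hdens
  have hπIco : π (cubeIco d) = 1 :=
    measure_cubeIco_eq_one (Measure.absolutelyContinuous_of_le_smul hM) hπc
  have hnorm : ∀ ε > 0, ∀ᶠ N in atTop, ∀ y ∈ cubeIcc d, |∫ x, g x y ∂πseq N - 1| ≤ ε :=
    fun ε hε => (eventually_abs_integral_sub_le isCompact_cubeIcc hgcont hseqc hπIco hconv
      hε).mono fun N h y hy => hgint y hy ▸ h y hy
  refine ⟨?_, fun ε hε => ?_⟩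
  · have : Nonempty (cubeIcc d) := ⟨⟨0, zero_mem_cubeIcc⟩⟩
    filter_upwards [hnorm (1 / 2) one_half_pos] with N hN
    exact one_half_pos.trans_le (le_ciInf fun y => by linarith [(abs_le.1 (hN y y.2)).1])
  filter_upwards [hnorm (min (ε / 4) (1 / 2)) (by positivity),
    eventually_abs_setIntegral_clBox_inter_cubeIco_sub_le isCompact_cubeIcc hgcont hconv
      (by positivity : 0 < ε / 4)] with N hc hbox y hy
  refine Real.iSup_le (fun ⟨⟨a, b⟩, hab⟩ => ?_) hε.le
  have hbox' := hbox y hy a b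
  rw [inter_eq_left.2 (clBox_subset_cubeIco hab)] at hbox'
  have hcN := (hc y hy).trans (min_le_right _ _)
  exact (abs_toReal_reweighted_sub_le (hseqc N) hπc (hgcont.uncurry_right y hy)
    (fun x hx => hgnn x hx y hy) (hgint y hy) (by linarith [(abs_le.1 hcN).1]) hab).trans
    (by linarith [(hc y hy).trans (min_le_left _ _)])

/-- abstract form of Theorem 2, part 1: if `π^N → π` in extreme norm,
`π` has a bounded density, and `g̃ ≥ 0` is continuous on the cube with
`∫ g̃(x,y) π(dx) = 1` for all `y`, then the normalizing constants
`c_N = inf_y ∫ g̃(x,y) π^N(dx)` are eventually positive and the reweighted kernels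
`M^N(y,dx) = g̃(x,y) π^N(dx) / ∫ g̃(x',y) π^N(dx')` converge to `M(y,dx) = g̃(x,y) π(dx)`
in extreme norm, uniformly in `y ∈ [0,1]^d`. -/
theorem backward_kernel_uniform_consistency
    {d : ℕ} (hd : 1 ≤ d)
    (πseq : ℕ → Measure (Fin d → ℝ)) (π : Measure (Fin d → ℝ))
    [∀ N, IsProbabilityMeasure (πseq N)] [IsProbabilityMeasure π]
    (hseqc : ∀ N, πseq N (cubeIcc d) = 1) (hπc : π (cubeIcc d) = 1)
    (hconv : Tendsto (fun N => extDist (πseq N) π) atTop (nhds 0))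
    (hdens : ∃ M : ℝ≥0∞, M ≠ ⊤ ∧ π ≤ M • volume)
    (g : (Fin d → ℝ) → (Fin d → ℝ) → ℝ)
    (hgcont : ContinuousOn (fun p : (Fin d → ℝ) × (Fin d → ℝ) => g p.1 p.2)
      (cubeIcc d ×ˢ cubeIcc d))
    (hgnn : ∀ x ∈ cubeIcc d, ∀ y ∈ cubeIcc d, 0 ≤ g x y)
    (hgint : ∀ y ∈ cubeIcc d, ∫ x, g x y ∂π = 1) :
    (∀ᶠ N in atTop, 0 < ⨅ y : ↥(cubeIcc d), ∫ x, g x (y : Fin d → ℝ) ∂(πseq N)) ∧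
    (∀ ε > 0, ∀ᶠ N in atTop, ∀ y ∈ cubeIcc d,
      extDist
        ((ENNReal.ofReal (∫ x, g x y ∂(πseq N)))⁻¹ •
          (πseq N).withDensity fun x => ENNReal.ofReal (g x y))
        (π.withDensity fun x => ENNReal.ofReal (g x y)) ≤ ε) :=
  backward_kernel_uniform_consistency_general πseq π hseqc hπc hconv hdens g hgcont hgnn hgint
end
end

section
/- Fix d ≥ 1. For each integer m ≥ 0, let C_m be a bijection from {0, 1, …, 2^{dm} − 1} to the set of dyadic closed subcubes of [0,1]^d of side length 2^{-m} (i.e., cubes of the form ∏_{i=1}^d [k_i 2^{-m}, (k_i+1) 2^{-m}] with integer k_i), and assume the nesting property: for every m ≥ 0 and every k ∈ {0, …, 2^{dm} − 1}, the cubes C_{m+1}(2^d k), C_{m+1}(2^d k + 1), …, C_{m+1}(2^d k + 2^d − 1) are exactly the 2^d dyadic subcubes of side length 2^{-(m+1)} contained in C_m(k). Then for every m ≥ 0 and every k ∈ {0, …, 2^{dm} − 2}, the union ⋃_{j=0}^{k} C_m(j) can be written as a union of at most 2^d (m + 1) closed axis-parallel hyperrectangles (in fact, of at most 2^d(m+1)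 dyadic cubes, fewer than 2^d of which are taken from each of the levels 0, 1, …, m). -/
/-!
Write `b = 2 ^ d`. A prefix of `n = b q + r` (`r < b`) cubes of level `m + 1` consists of the
first `b q` cubes, which by nesting are exactly the children of the first `q` cubes of level `m`,
followed by `r` single cubes of level `m + 1`. Induction on `m` therefore writes every prefix of
level `m` as a union of at most `b m + 1` dyadic cubes. Nesting gives the children identity
because the dyadic children of a dyadic cube cover it: in each coordinate the interval splits at
its midpoint.
-/

open Set

noncomputable section

/-- The closed dyadic cube of level `m` with lower corner `(c i / 2^m)ᵢ`. -/
def dyadicCube (d m : ℕ) (c : Fin d → ℕ) : Set (Fin d → ℝ) :=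
  Set.univ.pi fun i => Set.Icc ((c i : ℝ) / 2 ^ m) (((c i : ℝ) + 1) / 2 ^ m)

/-- `S` is a dyadic subcube of `[0,1]^d` of side length `2^{-m}`. -/
def IsDyadicCube (d m : ℕ) (S : Set (Fin d → ℝ)) : Prop :=
  ∃ c : Fin d → ℕ, (∀ i, c i < 2 ^ m) ∧ S = dyadicCube d m c

def dyadicInterval (m c : ℕ) : Set ℝ :=
  Icc ((c : ℝ) / 2 ^ m) (((c : ℝ) + 1) / 2 ^ m)

theorem dyadicCube_eq_pi (d m : ℕ) (c : Fin d → ℕ) :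
    dyadicCube d m c = univ.pi fun i => dyadicInterval m (c i) := rfl

theorem dyadicInterval_succ_union (m c : ℕ) :
    dyadicInterval (m + 1) (2 * c) ∪ dyadicInterval (m + 1) (2 * c + 1) = dyadicInterval m c := by
  have h2 : (0 : ℝ) < 2 ^ (m + 1) := by positivity
  unfold dyadicInterval
  push_cast
  rw [Icc_union_Icc_eq_Icc (by gcongr; linarith) (by gcongr; linarith)]
  congr 1 <;> field_simp <;> ring

theorem dyadicInterval_succ_subset {m a c : ℕ} (h : a / 2 = c) :
    dyadicInterval (m + 1) a ⊆ dyadicInterval m c := by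
  rw [← dyadicInterval_succ_union m c]
  obtain rfl | rfl : a = 2 * c ∨ a = 2 * c + 1 := by omega
  exacts [subset_union_left, subset_union_right]

theorem exists_dyadicInterval_succ_mem {m c : ℕ} {x : ℝ} (hx : x ∈ dyadicInterval m c) :
    ∃ a, a / 2 = c ∧ x ∈ dyadicInterval (m + 1) a := by
  rw [← dyadicInterval_succ_union m c] at hx
  rcases hx with hx | hx
  exacts [⟨_, by omega, hx⟩, ⟨_, by omega, hx⟩]

theorem dyadicCube_succ_subset {d m : ℕ} {c c' : Fin d → ℕ} (h : ∀ i, c' i / 2 = c i) :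
    dyadicCube d (m + 1) c' ⊆ dyadicCube d m c := by
  rw [dyadicCube_eq_pi, dyadicCube_eq_pi]
  exact pi_mono fun i _ => dyadicInterval_succ_subset (h i)

theorem exists_dyadicCube_succ_mem {d m : ℕ} {c : Fin d → ℕ} {x : Fin d → ℝ}
    (hx : x ∈ dyadicCube d m c) :
    ∃ c' : Fin d → ℕ, (∀ i, c' i / 2 = c i) ∧ x ∈ dyadicCube d (m + 1) c' := by
  rw [dyadicCube_eq_pi, mem_univ_pi] at hx
  choose c' hc' hxc' using fun i => exists_dyadicInterval_succ_mem (hx i)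
  exact ⟨c', hc', by rw [dyadicCube_eq_pi, mem_univ_pi]; exact hxc'⟩

theorem IsDyadicCube.sUnion_children {d m : ℕ} {S : Set (Fin d → ℝ)} (hS : IsDyadicCube d m S) :
    ⋃₀ {T | IsDyadicCube d (m + 1) T ∧ T ⊆ S} = S := by
  refine subset_antisymm (sUnion_subset fun T hT => hT.2) fun x hx => ?_
  obtain ⟨c, hc, rfl⟩ := hS
  obtain ⟨c', hc', hxc'⟩ := exists_dyadicCube_succ_mem hx
  refine ⟨_, ⟨⟨c', fun i => ?_, rfl⟩, dyadicCube_succ_subset hc'⟩, hxc'⟩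
  have := hc i
  have := hc' i
  rw [pow_succ]
  omega

theorem IsDyadicCube.exists_eq_pi_Icc {d m : ℕ} {S : Set (Fin d → ℝ)} (hS : IsDyadicCube d m S) :
    ∃ a b : Fin d → ℝ, (∀ i, a i ≤ b i) ∧ S = univ.pi fun i => Icc (a i) (b i) := by
  obtain ⟨c, -, rfl⟩ := hS
  exact ⟨_, _, fun i => by gcongr; linarith, rfl⟩

theorem biUnion_range_add {α : Type*} (f : ℕ → Set α) (a n : ℕ) :
    ⋃ j ∈ Finset.range (a + n), f j =
      (⋃ j ∈ Finset.range a, f j) ∪ ⋃ i ∈ Finset.range n, f (a + i) := by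
  rw [Finset.range_add, Finset.set_biUnion_union, Finset.map_eq_image,
    Finset.set_biUnion_finset_image]
  rfl

section Nesting

variable {α : Type*} {b : ℕ} {C : ℕ → ℕ → Set α}

theorem biUnion_range_mul_eq_of_children
    (hC : ∀ m, ∀ k < b ^ m, ⋃ i ∈ Finset.range b, C (m + 1) (b * k + i) = C m k)
    {m q : ℕ} (hq : q ≤ b ^ m) :
    ⋃ j ∈ Finset.range (b * q), C (m + 1) j = ⋃ k ∈ Finset.range q, C m k := by
  induction q with
  | zero => simp
  | succ q ih =>
    rw [Nat.mul_succ, biUnion_range_add, ih (by omega), hC m q (by omega), Finset.range_add_one,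
      Finset.set_biUnion_insert, union_comm]

theorem exists_finset_biUnion_range_eq_of_children (hb : 0 < b)
    (hC : ∀ m, ∀ k < b ^ m, ⋃ i ∈ Finset.range b, C (m + 1) (b * k + i) = C m k) :
    ∀ m, ∀ n ≤ b ^ m, ∃ F : Finset (ℕ × ℕ), F.card ≤ b * m + 1 ∧ (∀ p ∈ F, p.2 < b ^ p.1) ∧
      ⋃ j ∈ Finset.range n, C m j = ⋃ p ∈ F, C p.1 p.2 := by
  intro m
  induction m with
  | zero =>
    intro n hn
    refine ⟨(Finset.range n).image (0, ·), ?_, ?_, ?_⟩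
    · exact Finset.card_image_le.trans (by simpa using hn)
    · simp only [Finset.mem_image, Finset.mem_range]
      rintro _ ⟨j, hj, rfl⟩
      exact hj.trans_le hn
    · rw [Finset.set_biUnion_finset_image]
  | succ m ih =>
    intro n hn
    obtain ⟨q, r, hr, rfl⟩ : ∃ q r, r < b ∧ n = b * q + r :=
      ⟨n / b, n % b, Nat.mod_lt n hb, (Nat.div_add_mod n b).symm⟩
    have hq : q ≤ b ^ m := by
      rw [pow_succ'] at hn
      exact Nat.le_of_mul_le_mul_left (by omega) hb
    obtain ⟨F, hcard, hF, hU⟩ := ih q hq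
    refine ⟨F ∪ (Finset.range r).image fun i => (m + 1, b * q + i), ?_, ?_, ?_⟩
    · calc _ ≤ F.card + ((Finset.range r).image fun i => (m + 1, b * q + i)).card :=
            Finset.card_union_le _ _
        _ ≤ (b * m + 1) + r := add_le_add hcard (Finset.card_image_le.trans (by simp))
        _ ≤ b * (m + 1) + 1 := by rw [Nat.mul_succ]; omega
    · simp only [Finset.mem_union, Finset.mem_image, Finset.mem_range]
      rintro _ (hp | ⟨i, hi, rfl⟩)
      · exact hF _ hp
      · exact lt_of_lt_of_le (by omega) hn
    · rw [biUnion_range_add, biUnion_range_mul_eq_of_children hC hq, hU,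
        Finset.set_biUnion_union, Finset.set_biUnion_finset_image]

end Nesting

theorem iUnion_children_eq_of_nest {d : ℕ} {C : ℕ → ℕ → Set (Fin d → ℝ)}
    (hcube : ∀ m, ∀ k < 2 ^ (d * m), IsDyadicCube d m (C m k))
    (hnest : ∀ m, ∀ k < 2 ^ (d * m),
      {S | ∃ i < 2 ^ d, S = C (m + 1) (2 ^ d * k + i)} =
      {S | IsDyadicCube d (m + 1) S ∧ S ⊆ C m k})
    (m k : ℕ) (hk : k < (2 ^ d) ^ m) :
    ⋃ i ∈ Finset.range (2 ^ d), C (m + 1) (2 ^ d * k + i) = C m k := by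
  rw [← pow_mul] at hk
  rw [← (hcube m k hk).sUnion_children, ← hnest m k hk]
  ext x
  simp

theorem hilbert_prefix_union_hyperrectangles_general
    {d : ℕ}
    (C : ℕ → ℕ → Set (Fin d → ℝ))
    (hcube : ∀ m, ∀ k < 2 ^ (d * m), IsDyadicCube d m (C m k))
    (hnest : ∀ m, ∀ k < 2 ^ (d * m),
      {S | ∃ i < 2 ^ d, S = C (m + 1) (2 ^ d * k + i)} =
      {S | IsDyadicCube d (m + 1) S ∧ S ⊆ C m k}) :
    ∀ m k, k + 2 ≤ 2 ^ (d * m) →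
      ∃ (p : ℕ) (R : Fin p → Set (Fin d → ℝ)), p ≤ 2 ^ d * (m + 1) ∧
        (∀ j, ∃ a b : Fin d → ℝ, (∀ i, a i ≤ b i) ∧
          R j = Set.univ.pi fun i => Set.Icc (a i) (b i)) ∧
        (⋃ j ∈ Finset.range (k + 1), C m j) = ⋃ j, R j := by
  intro m k hk
  rw [pow_mul] at hk
  obtain ⟨F, hcard, hF, hU⟩ := exists_finset_biUnion_range_eq_of_children (by positivity)
    (iUnion_children_eq_of_nest hcube hnest) m (k + 1) (by omega)
  set e := F.equivFin.symm
  refine ⟨F.card, fun j => C (e j).1.1 (e j).1.2, ?_, fun j => ?_, ?_⟩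
  · have := Nat.one_le_two_pow (n := d)
    rw [Nat.mul_succ]
    omega
  · exact (hcube _ _ (by rw [pow_mul]; exact hF _ (e j).2)).exists_eq_pi_Icc
  · rw [hU, ← Finset.set_biUnion_coe, biUnion_eq_iUnion]
    exact (e.surjective.iUnion_comp fun p : F => C p.1.1 p.1.2).symm

/-- combinatorial form of Lemma B.1: if, for every level `m`,
`C m` is a bijection from `{0, …, 2^{dm} − 1}` onto the dyadic subcubes of `[0,1]^d`
of side `2^{-m}` satisfying the nesting property (the children `C (m+1) (2^d k + i)`,
`i < 2^d`, are exactly the dyadic subcubes of `C m k`), then each prefix union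
`⋃_{j ≤ k} C m j` (with `k ≤ 2^{dm} − 2`) is a union of at most `2^d (m+1)` closed
axis-parallel hyperrectangles. -/
theorem hilbert_prefix_union_hyperrectangles
    {d : ℕ} (hd : 1 ≤ d)
    (C : ℕ → ℕ → Set (Fin d → ℝ))
    (hcube : ∀ m, ∀ k < 2 ^ (d * m), IsDyadicCube d m (C m k))
    (hinj : ∀ m, ∀ k < 2 ^ (d * m), ∀ k' < 2 ^ (d * m), C m k = C m k' → k = k')
    (hsurj : ∀ m, ∀ S, IsDyadicCube d m S → ∃ k < 2 ^ (d * m), C m k = S)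
    (hnest : ∀ m, ∀ k < 2 ^ (d * m),
      {S | ∃ i < 2 ^ d, S = C (m + 1) (2 ^ d * k + i)} =
      {S | IsDyadicCube d (m + 1) S ∧ S ⊆ C m k}) :
    ∀ m k, k + 2 ≤ 2 ^ (d * m) →
      ∃ (p : ℕ) (R : Fin p → Set (Fin d → ℝ)), p ≤ 2 ^ d * (m + 1) ∧
        (∀ j, ∃ a b : Fin d → ℝ, (∀ i, a i ≤ b i) ∧
          R j = Set.univ.pi fun i => Set.Icc (a i) (b i)) ∧
        (⋃ j ∈ Finset.range (k + 1), C m j) = ⋃ j, R j :=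
  hilbert_prefix_union_hyperrectangles_general C hcube hnest
end
end

section
/- Let π be a probability measure on [0,1]^d and F a triangular transform of π such that: F is Hölder continuous with exponent κ ∈ (0,1] (there is C ≥ 0 with ‖F(x) − F(x')‖_∞ ≤ C ‖x − x'‖_∞^κ), and there is M < ∞ such that for every i and every fixed x_{1:i−1} the map x_i ↦ F_i(x_{1:i−1}, x_i) is Lipschitz with constant M. Set β = ⌈κ^{-1}⌉. Then there exists a constant C̃ > 0 such that for every integer L ≥ 2 and every integer L' ≥ C̃ L, the following holds: whenever x, x' ∈ [0,1)^d lie in the same cell of the partition of [0,1)^d into congruent axis-parallel hyperrectangles whose i-th side length equals L'^{-β^{d−i}} (for i = 1, …, d), one has |F_i(x_1, …, x_i) − F_i(x'_1, …, x'_i)| ≤ L^{-β^{d−i}} for every i ∈ {1, …, d}. -/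
open MeasureTheory ProbabilityTheory Filter Set
open scoped ENNReal NNReal

noncomputable section

/-- A triangular (Rosenblatt-type) transform `F` of a probability measure `π` on `[0,1]^d`:
the `i`-th component of `F x` depends only on `x_1, …, x_i`, is strictly increasing in `x_i`,
`F` restricts to a bijection of `[0,1)^d` onto itself, and the pushforward of `π` by `F`
is Lebesgue measure on the unit cube. -/
structure IsTriangular {d : ℕ} (π : Measure (Fin d → ℝ))
    (F : (Fin d → ℝ) → (Fin d → ℝ)) : Prop where
  measurable : Measurable F
  dep : ∀ (i : Fin d) (x y : Fin d → ℝ), (∀ j, j ≤ i → x j = y j) → F x i = F y i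
  strictMono : ∀ (i : Fin d), ∀ x ∈ cubeIcc d,
    StrictMonoOn (fun s : ℝ => F (Function.update x i s) i) (Set.Icc (0 : ℝ) 1)
  bijOn : Set.BijOn F (cubeIco d) (cubeIco d)
  map_eq : π.map F = volume.restrict (cubeIco d)

/-- key intermediate construction in the proof of Theorem 3:
for a triangular transform `F` of `π` which is `κ`-Hölder and whose conditional CDFs are
`M`-Lipschitz in the last variable, with `β = ⌈κ⁻¹⌉`, there is `C̃ > 0` such that for all
integers `L ≥ 2` and `L' ≥ C̃ L`, any two points of `[0,1)^d` lying in the same cell of the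
anisotropic partition with `i`-th side length `L'^{-β^{d−i}}` satisfy
`|F_i(x_{1:i}) − F_i(x'_{1:i})| ≤ L^{-β^{d−i}}` for every `i`. -/
theorem oscillation_control_on_refined_partition
    {d : ℕ} (hd : 1 ≤ d)
    (π : Measure (Fin d → ℝ)) [IsProbabilityMeasure π] (hπc : π (cubeIcc d) = 1)
    (F : (Fin d → ℝ) → (Fin d → ℝ)) (hF : IsTriangular π F)
    (κ : ℝ) (hκ : κ ∈ Set.Ioc (0 : ℝ) 1)
    (C : ℝ) (hC : 0 ≤ C)
    (hHolder : ∀ x ∈ cubeIcc d, ∀ y ∈ cubeIcc d, ‖F x - F y‖ ≤ C * ‖x - y‖ ^ κ)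
    (M : ℝ)
    (hLip : ∀ (i : Fin d), ∀ x ∈ cubeIcc d, ∀ x' ∈ cubeIcc d,
      (∀ j, j ≠ i → x j = x' j) → |F x i - F x' i| ≤ M * |x i - x' i|) :
    ∃ Ct : ℝ, 0 < Ct ∧ ∀ (L L' : ℕ), 2 ≤ L → Ct * (L : ℝ) ≤ (L' : ℝ) →
      ∀ x ∈ cubeIco d, ∀ x' ∈ cubeIco d,
      (∀ i : Fin d, ⌊x i * (L' : ℝ) ^ (⌈κ⁻¹⌉₊ ^ (d - 1 - (i : ℕ)))⌋ =
        ⌊x' i * (L' : ℝ) ^ (⌈κ⁻¹⌉₊ ^ (d - 1 - (i : ℕ)))⌋) →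
      ∀ i : Fin d, |F x i - F x' i| ≤ ((L : ℝ) ^ (⌈κ⁻¹⌉₊ ^ (d - 1 - (i : ℕ))))⁻¹ := by

  -- Notation
  set β := ⌈κ⁻¹⌉₊ with hβ
  have hκ0 : (0:ℝ) < κ := hκ.1
  have hβ1 : 1 ≤ β := by
    rw [hβ, Nat.one_le_ceil_iff]; positivity
  have hκβ : 1 ≤ κ * (β : ℝ) := by
    have h1 : κ⁻¹ ≤ (β : ℝ) := Nat.le_ceil _
    calc (1:ℝ) = κ * κ⁻¹ := (mul_inv_cancel₀ hκ0.ne').symm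
      _ ≤ κ * β := by gcongr
  -- M is nonnegative
  have hM : 0 ≤ M := by
    set i₀ : Fin d := ⟨0, hd⟩
    set x0 : Fin d → ℝ := fun _ => 0 with hx0def
    set x1 : Fin d → ℝ := Function.update x0 i₀ 1 with hx1def
    have hx0 : x0 ∈ cubeIcc d := by
      intro j _; exact Set.mem_Icc.mpr ⟨le_refl 0, zero_le_one⟩
    have hx1 : x1 ∈ cubeIcc d := by
      intro j _
      by_cases hj : j = i₀
      · subst hj; rw [hx1def, Function.update_self]
        exact Set.mem_Icc.mpr ⟨zero_le_one, le_refl 1⟩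
      · rw [hx1def, Function.update_of_ne hj]
        exact Set.mem_Icc.mpr ⟨le_refl 0, zero_le_one⟩
    have h := hLip i₀ x1 hx1 x0 hx0 (fun j hj => Function.update_of_ne hj _ _)
    have h1 : x1 i₀ = 1 := Function.update_self _ _ _
    have h0 : x0 i₀ = 0 := rfl
    rw [h1, h0] at h
    simpa using le_trans (abs_nonneg _) h
  refine ⟨C + M + 1, by positivity, ?_⟩
  intro L L' hL hL' x hx x' hx' hcell i
  set Ct : ℝ := C + M + 1 with hCt
  have hCt1 : (1:ℝ) ≤ Ct := by rw [hCt]; linarith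
  have hL2 : (2:ℝ) ≤ (L:ℝ) := by exact_mod_cast hL
  have ht2 : (2:ℝ) ≤ (L':ℝ) := by
    calc (2:ℝ) ≤ 1 * (L:ℝ) := by linarith
      _ ≤ Ct * (L:ℝ) := by nlinarith
      _ ≤ (L':ℝ) := hL'
  have ht1 : (1:ℝ) < (L':ℝ) := by linarith
  have ht0 : (0:ℝ) < (L':ℝ) := by linarith
  -- membership facts
  have hxI : x ∈ cubeIcc d := by
    intro j _
    have h := Set.mem_Ico.mp (hx j (Set.mem_univ j))
    exact Set.mem_Icc.mpr ⟨h.1, h.2.le⟩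
  have hx'I : x' ∈ cubeIcc d := by
    intro j _
    have h := Set.mem_Ico.mp (hx' j (Set.mem_univ j))
    exact Set.mem_Icc.mpr ⟨h.1, h.2.le⟩
  -- cell estimates
  have hcoord : ∀ j : Fin d, |x j - x' j| ≤ ((L':ℝ) ^ (β ^ (d - 1 - (j:ℕ))))⁻¹ := by
    intro j
    set N : ℝ := (L':ℝ) ^ (β ^ (d - 1 - (j:ℕ))) with hN
    have hNpos : 0 < N := by positivity
    have hfl := hcell j
    have habs : |x j * N - x' j * N| < 1 := Int.abs_sub_lt_one_of_floor_eq_floor hfl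
    have : |x j - x' j| * N < 1 := by
      rwa [← sub_mul, abs_mul, abs_of_pos hNpos] at habs
    have := (lt_div_iff₀ hNpos).mpr this
    rw [one_div] at this
    exact this.le
  set ev : ℕ := β ^ (d - 1 - (i:ℕ)) with hev
  have hid : (i:ℕ) < d := i.isLt
  -- the intermediate point z (Hölder part) and w (Lipschitz part)
  set z : Fin d → ℝ := fun j => if j < i then x' j else x j with hz
  set w : Fin d → ℝ := Function.update x' i (x i) with hw
  have hzI : z ∈ cubeIcc d := by
    intro j _
    by_cases hj : j < i
    · simp only [hz, if_pos hj]; exact hx'I j (Set.mem_univ j)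
    · simp only [hz, if_neg hj]; exact hxI j (Set.mem_univ j)
  have hwI : w ∈ cubeIcc d := by
    intro j _
    by_cases hj : j = i
    · subst hj; rw [hw, Function.update_self]; exact hxI j (Set.mem_univ j)
    · rw [hw, Function.update_of_ne hj]; exact hx'I j (Set.mem_univ j)
  have hzw : F z i = F w i := by
    apply hF.dep
    intro j hj
    rcases lt_or_eq_of_le hj with h | h
    · rw [hz, hw]; simp only [if_pos h, Function.update_of_ne (ne_of_lt h)]
    · have : j = i := Fin.ext (by exact_mod_cast congrArg Fin.val h)
      subst this
      rw [hz, hw]; simp [lt_irrefl]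
  -- Hölder part
  have hHol : |F x i - F z i| ≤ C * ((L':ℝ) ^ ev)⁻¹ := by
    set n : ℕ := β ^ (d - (i:ℕ)) with hn
    set δ : ℝ := ((L':ℝ) ^ n)⁻¹ with hδ
    have hδ0 : 0 ≤ δ := by positivity
    have hnorm : ‖x - z‖ ≤ δ := by
      rw [pi_norm_le_iff_of_nonneg hδ0]
      intro j
      rw [Pi.sub_apply, Real.norm_eq_abs]
      by_cases hj : j < i
      · simp only [hz, if_pos hj]
        refine le_trans (hcoord j) ?_
        apply inv_anti₀ (by positivity)
        apply pow_le_pow_right₀ (le_of_lt ht1)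
        apply Nat.pow_le_pow_right hβ1
        have : (j:ℕ) < (i:ℕ) := hj
        omega
      · simp only [hz, if_neg hj, sub_self, abs_zero]
        exact hδ0
    have hbound := hHolder x hxI z hzI
    have hcomp : |F x i - F z i| ≤ ‖F x - F z‖ := by
      have := norm_le_pi_norm (F x - F z) i
      rwa [Pi.sub_apply, Real.norm_eq_abs] at this
    have hpow : ‖x - z‖ ^ κ ≤ δ ^ κ := Real.rpow_le_rpow (norm_nonneg _) hnorm hκ0.le
    have hδκ : δ ^ κ ≤ ((L':ℝ) ^ ev)⁻¹ := by
      have e1 : δ ^ κ = (L':ℝ) ^ (-(n:ℝ) * κ) := by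
        rw [hδ, ← Real.rpow_natCast (L':ℝ) n, ← Real.rpow_neg ht0.le,
          ← Real.rpow_mul ht0.le]
      have e2 : ((L':ℝ) ^ ev)⁻¹ = (L':ℝ) ^ (-(ev:ℝ)) := by
        rw [← Real.rpow_natCast (L':ℝ) ev, ← Real.rpow_neg ht0.le]
      rw [e1, e2, Real.rpow_le_rpow_left_iff ht1, neg_mul, neg_le_neg_iff]
      have hnev : n = ev * β := by
        rw [hn, hev, ← pow_succ]
        congr 1
        omega
      rw [hnev]
      have hev0 : (0:ℝ) ≤ (ev:ℝ) := Nat.cast_nonneg _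
      push_cast
      nlinarith [hκβ, hev0]
    calc |F x i - F z i| ≤ ‖F x - F z‖ := hcomp
      _ ≤ C * ‖x - z‖ ^ κ := hbound
      _ ≤ C * (δ ^ κ) := by gcongr
      _ ≤ C * ((L':ℝ) ^ ev)⁻¹ := by gcongr
  -- Lipschitz part
  have hLipP : |F w i - F x' i| ≤ M * ((L':ℝ) ^ ev)⁻¹ := by
    have h := hLip i w hwI x' hx'I (fun j hj => Function.update_of_ne hj _ _)
    have hwi : w i = x i := Function.update_self _ _ _
    rw [hwi] at h
    exact le_trans h (by have := hcoord i; gcongr)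
  -- combine
  have hcomb : |F x i - F x' i| ≤ (C + M) * ((L':ℝ) ^ ev)⁻¹ := by
    calc |F x i - F x' i| ≤ |F x i - F z i| + |F z i - F x' i| := abs_sub_le _ _ _
      _ = |F x i - F z i| + |F w i - F x' i| := by rw [hzw]
      _ ≤ C * ((L':ℝ) ^ ev)⁻¹ + M * ((L':ℝ) ^ ev)⁻¹ := add_le_add hHol hLipP
      _ = (C + M) * ((L':ℝ) ^ ev)⁻¹ := by ring
  refine le_trans hcomb ?_
  have hev1 : 1 ≤ ev := Nat.one_le_pow _ _ hβ1
  have hLpos : (0:ℝ) < (L:ℝ) := by linarith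
  have key : Ct * ((L:ℝ) ^ ev) ≤ (L':ℝ) ^ ev := by
    calc Ct * (L:ℝ) ^ ev ≤ Ct ^ ev * (L:ℝ) ^ ev :=
          mul_le_mul_of_nonneg_right (le_self_pow₀ (by linarith) (by omega)) (by positivity)
      _ = (Ct * (L:ℝ)) ^ ev := (mul_pow _ _ _).symm
      _ ≤ (L':ℝ) ^ ev := pow_le_pow_left₀ (by positivity) hL' _
  have h1 : ((L':ℝ) ^ ev)⁻¹ ≤ (Ct * ((L:ℝ) ^ ev))⁻¹ :=
    inv_anti₀ (by positivity) key
  have h2 : (C + M) / Ct ≤ 1 := by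
    rw [div_le_one (by positivity)]
    rw [hCt]; linarith
  calc (C + M) * ((L':ℝ) ^ ev)⁻¹
      ≤ (C + M) * (Ct * ((L:ℝ) ^ ev))⁻¹ := mul_le_mul_of_nonneg_left h1 (by linarith)
    _ = (C + M) / Ct * ((L:ℝ) ^ ev)⁻¹ := by rw [mul_inv]; ring
    _ ≤ 1 * ((L:ℝ) ^ ev)⁻¹ := mul_le_mul_of_nonneg_right h2 (by positivity)
    _ = ((L:ℝ) ^ ev)⁻¹ := one_mul _
end
end

section
/- Let d ≥ 1, N ≥ 1, points x^1, …, x^N ∈ [0,1]^d, and weights W^1, …, W^N ≥ 0 with ∑_{m=1}^N W^m = 1 and max_m W^m ≤ A/N for some A ≥ 1. Let g : [0,1]^d × [0,1]^d → ℝ satisfy 0 < g̲ ≤ g(x, y) ≤ ḡ < ∞ for all x, y ∈ [0,1]^d, and let ω(δ) = sup{ |g(x, y) − g(x, y')| : x, y, y' ∈ [0,1]^d, ‖y − y'‖_∞ ≤ δ } denote its modulus of continuity in the second argument. Define the normalized backward weights W̃^m(y) = W^m g(x^m, y) / ∑_{k=1}^N W^k g(x^k, y). Then for every m ∈ {1,…,N}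 and all y, y' ∈ [0,1]^d, |W̃^m(y) − W̃^m(y')| ≤ (A / (N g̲)) (1 + ḡ / g̲) · ω(‖y − y'‖_∞). -/
/-!
Write `S(y) = ∑ₖ Wᵏ g(xᵏ, y)`. Since the weights are a probability vector, `S ≥ g̲` and
`|S(y) − S(y')| ≤ ω`. The splitting
`a/S − a'/S' = (a − a')/S + a'(S' − S)/(S S')` with `a = Wᵐ g(xᵐ, y) ≤ (A/N) ḡ` then bounds
the two terms by `(A/N) ω / g̲` and `(A/N) ḡ ω / g̲²`.
-/

open MeasureTheory ProbabilityTheory Filter Set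
open scoped ENNReal NNReal

noncomputable section

/-- The modulus of continuity of `g(x, ·)` (uniformly in `x`) on the unit cube:
`ω(δ) = sup { |g(x,y) − g(x,y')| : x, y, y' ∈ [0,1]^d, ‖y − y'‖_∞ ≤ δ }`. -/
def modCont {d : ℕ} (g : (Fin d → ℝ) → (Fin d → ℝ) → ℝ) (δ : ℝ) : ℝ :=
  ⨆ p : {q : (Fin d → ℝ) × (Fin d → ℝ) × (Fin d → ℝ) //
      q.1 ∈ cubeIcc d ∧ q.2.1 ∈ cubeIcc d ∧ q.2.2 ∈ cubeIcc d ∧ ‖q.2.1 - q.2.2‖ ≤ δ},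
    |g p.1.1 p.1.2.1 - g p.1.1 p.1.2.2|

theorem abs_sub_le_modCont {d : ℕ} {g : (Fin d → ℝ) → (Fin d → ℝ) → ℝ} {lo hi : ℝ}
    (hg : ∀ a ∈ cubeIcc d, ∀ b ∈ cubeIcc d, lo ≤ g a b ∧ g a b ≤ hi)
    {a y y' : Fin d → ℝ} (ha : a ∈ cubeIcc d) (hy : y ∈ cubeIcc d) (hy' : y' ∈ cubeIcc d) :
    |g a y - g a y'| ≤ modCont g ‖y - y'‖ := by
  unfold modCont
  refine le_ciSup (f := fun p : {q : (Fin d → ℝ) × (Fin d → ℝ) × (Fin d → ℝ) // _} =>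
    |g p.1.1 p.1.2.1 - g p.1.1 p.1.2.2|) ⟨hi - lo, ?_⟩ ⟨(a, y, y'), ha, hy, hy', le_rfl⟩
  rintro _ ⟨⟨⟨z, b, c⟩, hz, hb, hc, -⟩, rfl⟩
  obtain ⟨hb_lo, hb_hi⟩ := hg z hz b hb
  obtain ⟨hc_lo, hc_hi⟩ := hg z hz c hc
  rw [abs_sub_le_iff]
  constructor <;> linarith

theorem abs_div_sub_div_le {p p' S S' lo P ε₁ ε₂ : ℝ} (hlo : 0 < lo) (hS : lo ≤ S)
    (hS' : lo ≤ S') (hp' : 0 ≤ p') (hp'P : p' ≤ P) (hp : |p - p'| ≤ ε₁)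
    (hSS : |S - S'| ≤ ε₂) :
    |p / S - p' / S'| ≤ ε₁ / lo + P * ε₂ / lo ^ 2 := by
  have hSpos : 0 < S := hlo.trans_le hS
  have hS'pos : 0 < S' := hlo.trans_le hS'
  have hsplit : p / S - p' / S' = (p - p') / S + p' * (S' - S) / (S * S') := by
    field_simp
    ring
  have hnum : |p - p'| / S ≤ ε₁ / lo := by gcongr; exact (abs_nonneg _).trans hp
  have hden : p' * |S' - S| / (S * S') ≤ P * ε₂ / lo ^ 2 := by
    have hP : 0 ≤ P := hp'.trans hp'P
    have hε₂ : 0 ≤ ε₂ := (abs_nonneg _).trans hSS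
    rw [abs_sub_comm, sq]
    gcongr
  calc |p / S - p' / S'|
      ≤ |(p - p') / S| + |p' * (S' - S) / (S * S')| := hsplit ▸ abs_add_le _ _
    _ = |p - p'| / S + p' * |S' - S| / (S * S') := by
      rw [abs_div, abs_div, abs_mul, abs_of_pos hSpos, abs_of_pos (mul_pos hSpos hS'pos),
        abs_of_nonneg hp']
    _ ≤ ε₁ / lo + P * ε₂ / lo ^ 2 := add_le_add hnum hden

section WeightedMean

variable {ι : Type*} [Fintype ι] {W u v : ι → ℝ}

theorem le_sum_mul_of_sum_eq_one {lo : ℝ} (hW : ∀ k, 0 ≤ W k) (hW1 : ∑ k, W k = 1)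
    (hu : ∀ k, lo ≤ u k) : lo ≤ ∑ k, W k * u k :=
  calc lo = ∑ k, W k * lo := by rw [← Finset.sum_mul, hW1, one_mul]
    _ ≤ ∑ k, W k * u k := Finset.sum_le_sum fun k _ => mul_le_mul_of_nonneg_left (hu k) (hW k)

theorem abs_sum_mul_sub_sum_mul_le {ε : ℝ} (hW : ∀ k, 0 ≤ W k) (hW1 : ∑ k, W k = 1)
    (huv : ∀ k, |u k - v k| ≤ ε) : |∑ k, W k * u k - ∑ k, W k * v k| ≤ ε :=
  calc |∑ k, W k * u k - ∑ k, W k * v k| = |∑ k, W k * (u k - v k)| := by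
        simp only [mul_sub, Finset.sum_sub_distrib]
    _ ≤ ∑ k, |W k * (u k - v k)| := Finset.abs_sum_le_sum_abs _ _
    _ ≤ ∑ k, W k * ε := Finset.sum_le_sum fun k _ => by
        rw [abs_mul, abs_of_nonneg (hW k)]
        exact mul_le_mul_of_nonneg_left (huv k) (hW k)
    _ = ε := by rw [← Finset.sum_mul, hW1, one_mul]

theorem abs_normalized_weight_sub_le {lo hi B ε : ℝ} (hlo : 0 < lo) (hW : ∀ k, 0 ≤ W k)
    (hW1 : ∑ k, W k = 1) (hu : ∀ k, lo ≤ u k) (hv : ∀ k, lo ≤ v k ∧ v k ≤ hi)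
    (huv : ∀ k, |u k - v k| ≤ ε) (m : ι) (hWm : W m ≤ B) :
    |W m * u m / ∑ k, W k * u k - W m * v m / ∑ k, W k * v k| ≤
      B / lo * (1 + hi / lo) * ε := by
  have hB : 0 ≤ B := (hW m).trans hWm
  have hvm : 0 ≤ v m := hlo.le.trans (hv m).1
  have hnum : |W m * u m - W m * v m| ≤ B * ε := by
    rw [← mul_sub, abs_mul, abs_of_nonneg (hW m)]
    exact mul_le_mul hWm (huv m) (abs_nonneg _) hB
  calc |W m * u m / ∑ k, W k * u k - W m * v m / ∑ k, W k * v k|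
      ≤ B * ε / lo + B * hi * ε / lo ^ 2 :=
        abs_div_sub_div_le hlo (le_sum_mul_of_sum_eq_one hW hW1 hu)
          (le_sum_mul_of_sum_eq_one hW hW1 fun k => (hv k).1) (mul_nonneg (hW m) hvm)
          (mul_le_mul hWm (hv m).2 hvm hB) hnum (abs_sum_mul_sub_sum_mul_le hW hW1 huv)
    _ = B / lo * (1 + hi / lo) * ε := by
      field_simp

end WeightedMean

theorem backward_weight_perturbation_general
    {d N : ℕ}
    (x : Fin N → (Fin d → ℝ)) (hx : ∀ n, x n ∈ cubeIcc d)
    (W : Fin N → ℝ) (hWnn : ∀ n, 0 ≤ W n) (hWsum : ∑ n, W n = 1)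
    (A : ℝ) (hWmax : ∀ n, W n ≤ A / N)
    (g : (Fin d → ℝ) → (Fin d → ℝ) → ℝ) (glow gup : ℝ) (hglow : 0 < glow)
    (hg : ∀ x' ∈ cubeIcc d, ∀ y ∈ cubeIcc d, glow ≤ g x' y ∧ g x' y ≤ gup) :
    ∀ m : Fin N, ∀ y ∈ cubeIcc d, ∀ y' ∈ cubeIcc d,
      |W m * g (x m) y / (∑ k, W k * g (x k) y) -
        W m * g (x m) y' / (∑ k, W k * g (x k) y')| ≤
      A / (N * glow) * (1 + gup / glow) * modCont g ‖y - y'‖ := by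
  intro m y hy y' hy'
  rw [← div_div]
  exact abs_normalized_weight_sub_le hglow hWnn hWsum (fun k => (hg (x k) (hx k) y hy).1)
    (fun k => hg (x k) (hx k) y' hy') (fun k => abs_sub_le_modCont hg (hx k) hy hy') m (hWmax m)

/-- perturbation of normalized backward-sampling weights, from the
proof of Corollary 2: if the weights satisfy `∑ W^m = 1`, `0 ≤ W^m ≤ A/N`, and
`0 < g̲ ≤ g ≤ ḡ` on the cube, then the normalized backward weights
`W̃^m(y) = W^m g(x^m, y) / ∑ₖ W^k g(x^k, y)` satisfy
`|W̃^m(y) − W̃^m(y')| ≤ (A/(N g̲)) (1 + ḡ/g̲) ω(‖y − y'‖_∞)`. -/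
theorem backward_weight_perturbation
    {d N : ℕ}
    (x : Fin N → (Fin d → ℝ)) (hx : ∀ n, x n ∈ cubeIcc d)
    (W : Fin N → ℝ) (hWnn : ∀ n, 0 ≤ W n) (hWsum : ∑ n, W n = 1)
    (A : ℝ) (hA : 1 ≤ A) (hWmax : ∀ n, W n ≤ A / N)
    (g : (Fin d → ℝ) → (Fin d → ℝ) → ℝ) (glow gup : ℝ) (hglow : 0 < glow)
    (hg : ∀ x' ∈ cubeIcc d, ∀ y ∈ cubeIcc d, glow ≤ g x' y ∧ g x' y ≤ gup) :
    ∀ m : Fin N, ∀ y ∈ cubeIcc d, ∀ y' ∈ cubeIcc d,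
      |W m * g (x m) y / (∑ k, W k * g (x k) y) -
        W m * g (x m) y' / (∑ k, W k * g (x k) y')| ≤
      A / (N * glow) * (1 + gup / glow) * modCont g ‖y - y'‖ :=
  backward_weight_perturbation_general x hx W hWnn hWsum A hWmax g glow gup hglow hg
end
end
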